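/- arXiv:math/9709210 — 4 statements merged into one kernel-verified Lean document; each statement's English description precedes it below -/
import Mathlib

section
/- Let X be a quasi-normed space with modulus of concavity ρ, i.e. ‖x+y‖ ≤ ρ(‖x‖+‖y‖) for all x,y. If r is defined by 2^(1/r - 1) = ρ, then for any finite sequence x₁,…,xₙ in X one has ‖x₁+⋯+xₙ‖ ≤ 4^(1/r) (‖x₁‖^r + ⋯ + ‖xₙ‖^r)^(1/r). (A quantitative form of the Aoki–Rolewicz theorem.) -/
/-!
Write `c = 2ρ = 2 ^ (1 / r)` and call `x` a vector of level `k ∈ ℤ` when `q x ≤ c ^ k`. Two vectors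
of level `k` add up to a vector of level `k + 1`, exactly as two copies of `2 ^ k` add up to
`2 ^ (k + 1)`. Merging vectors of equal level therefore leaves vectors of distinct levels, all below
any `K` with `∑ 2 ^ kᵢ < 2 ^ K`; summing them from the lowest level upwards, the sum of those below
level `j` has level `j`, so the total has level `K`. Finally `xᵢ` has a level `kᵢ` with
`2 ^ kᵢ < 2 q(xᵢ) ^ r`, and `K` can be chosen with `2 ^ K < 4 ∑ q(xᵢ) ^ r`.
-/

theorem Multiset.exists_eq_cons_cons_of_not_nodup_map {α β : Type*} {f : α → β}
    {m : Multiset α} (h : ¬ (m.map f).Nodup) :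
    ∃ a b t, m = a ::ₘ b ::ₘ t ∧ f a = f b := by
  classical
  obtain ⟨c, u, hc⟩ : ∃ c u, m.map f = c ::ₘ c ::ₘ u := by
    simpa [Multiset.nodup_iff_ne_cons_cons] using h
  obtain ⟨a, ha, rfl, hu⟩ := (Multiset.map_eq_cons f m _ _).2 hc
  obtain ⟨b, hb, hab, -⟩ := (Multiset.map_eq_cons f _ _ _).2 hu
  exact ⟨a, b, (m.erase a).erase b, by rw [Multiset.cons_erase hb, Multiset.cons_erase ha],
    hab.symm⟩

theorem two_zpow_clog_lt_two_mul {R : Type*} [Field R] [LinearOrder R] [IsStrictOrderedRing R]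
    [FloorSemiring R] {a : R} (ha : 0 < a) : (2 : R) ^ Int.clog 2 a < 2 * a := by
  have h := Int.zpow_pred_clog_lt_self (R := R) one_lt_two ha
  rw [zpow_sub_one₀ (by norm_num)] at h
  push_cast at h
  linarith

namespace AokiRolewicz

variable {X : Type*} [AddCommGroup X] {q : X → ℝ} {ρ : ℝ}

theorem map_add_le_of_le_of_le (htri : ∀ x y, q (x + y) ≤ ρ * (q x + q y)) (hρ : 0 ≤ ρ)
    {x y : X} {A : ℝ} (hx : q x ≤ A) (hy : q y ≤ A) : q (x + y) ≤ 2 * ρ * A :=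
  calc q (x + y) ≤ ρ * (q x + q y) := htri x y
    _ ≤ ρ * (A + A) := by gcongr
    _ = 2 * ρ * A := by ring

theorem map_sum_le_zpow_of_injOn_snd (htri : ∀ x y, q (x + y) ≤ ρ * (q x + q y))
    (hq : q 0 = 0) (hρ : 1 ≤ 2 * ρ) (s : Finset (X × ℤ))
    (hs : Set.InjOn Prod.snd (s : Set (X × ℤ))) (hlevel : ∀ p ∈ s, q p.1 ≤ (2 * ρ) ^ p.2)
    {K : ℤ} (hK : ∀ p ∈ s, p.2 < K) :
    q (∑ p ∈ s, p.1) ≤ (2 * ρ) ^ K := by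
  classical
  -- with the instance arguments left implicit, `induction` would turn them into goals
  induction s using @Finset.induction_on_max_value ℤ (X × ℤ) _ _ Prod.snd generalizing K with
  | empty => simpa [hq] using (zpow_pos (by linarith) K).le
  | insert a s ha hmax ih =>
    have hlt : ∀ p ∈ s, p.2 < a.2 := fun p hp => by
      have hne : p.2 ≠ a.2 := fun h => ha (hs (by simp [hp]) (by simp) h ▸ hp)
      exact (hmax p hp).lt_of_ne hne
    rw [Finset.sum_insert ha]
    calc q (a.1 + ∑ p ∈ s, p.1) ≤ 2 * ρ * (2 * ρ) ^ a.2 :=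
          map_add_le_of_le_of_le htri (by linarith) (hlevel a (by simp))
            (ih (hs.mono (by simp)) (fun p hp => hlevel p (by simp [hp])) hlt)
      _ = (2 * ρ) ^ (a.2 + 1) := by rw [zpow_add_one₀ (by linarith), mul_comm]
      _ ≤ (2 * ρ) ^ K := zpow_le_zpow_right₀ hρ (hK a (by simp))

theorem map_sum_le_zpow_of_sum_two_zpow_lt (htri : ∀ x y, q (x + y) ≤ ρ * (q x + q y))
    (hq : q 0 = 0) (hρ : 1 ≤ 2 * ρ) (m : Multiset (X × ℤ))
    (hlevel : ∀ p ∈ m, q p.1 ≤ (2 * ρ) ^ p.2) {K : ℤ}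
    (hK : (m.map fun p => (2 : ℝ) ^ p.2).sum < 2 ^ K) :
    q (m.map Prod.fst).sum ≤ (2 * ρ) ^ K := by
  induction hm : Multiset.card m using Nat.strong_induction_on generalizing m with
  | _ n ih =>
  by_cases hnd : (m.map Prod.snd).Nodup
  · refine map_sum_le_zpow_of_injOn_snd htri hq hρ ⟨m, hnd.of_map _⟩
      ((Multiset.nodup_map_iff_inj_on (hnd.of_map _)).1 hnd) hlevel fun p hp => ?_
    have : (2 : ℝ) ^ p.2 ≤ (m.map fun p => (2 : ℝ) ^ p.2).sum :=
      Multiset.single_le_sum (fun _ h => by obtain ⟨_, _, rfl⟩ := Multiset.mem_map.1 h; positivity)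
        _ (Multiset.mem_map_of_mem _ hp)
    exact (zpow_lt_zpow_iff_right₀ one_lt_two).1 (this.trans_lt hK)
  · obtain ⟨a, b, t, rfl, hab⟩ := Multiset.exists_eq_cons_cons_of_not_nodup_map hnd
    have hweight : (2 : ℝ) ^ a.2 + 2 ^ b.2 = 2 ^ (a.2 + 1) := by
      rw [← hab, zpow_add_one₀ two_ne_zero]; ring
    have hmerged : q (a.1 + b.1) ≤ (2 * ρ) ^ (a.2 + 1) := by
      rw [zpow_add_one₀ (by linarith), mul_comm]
      exact map_add_le_of_le_of_le htri (by linarith) (hlevel a (by simp))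
        (hab ▸ hlevel b (by simp))
    have := ih _ (by simp [← hm]) ((a.1 + b.1, a.2 + 1) ::ₘ t)
      (by simpa [hmerged] using fun p hp => hlevel p (by simp [hp]))
      (by simpa [← hweight, add_assoc] using hK) rfl
    simpa [add_assoc] using this

theorem map_finset_sum_le_zpow_of_sum_two_zpow_lt (htri : ∀ x y, q (x + y) ≤ ρ * (q x + q y))
    (hq : q 0 = 0) (hρ : 1 ≤ 2 * ρ) {ι : Type*} (s : Finset ι) (x : ι → X) (k : ι → ℤ)
    (hlevel : ∀ i ∈ s, q (x i) ≤ (2 * ρ) ^ k i) {K : ℤ} (hK : ∑ i ∈ s, (2 : ℝ) ^ k i < 2 ^ K) :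
    q (∑ i ∈ s, x i) ≤ (2 * ρ) ^ K := by
  simpa [Multiset.map_map] using map_sum_le_zpow_of_sum_two_zpow_lt htri hq hρ
    (s.val.map fun i => (x i, k i)) (by simpa using hlevel) (by simpa using hK)

theorem map_finset_sum_le_rpow_of_pos (htri : ∀ x y, q (x + y) ≤ ρ * (q x + q y))
    (hq : q 0 = 0) {r : ℝ} (hr : 0 < r) (hρ : 2 * ρ = 2 ^ (1 / r)) {ι : Type*}
    (s : Finset ι) (x : ι → X) (hpos : ∀ i ∈ s, 0 < q (x i)) :
    q (∑ i ∈ s, x i) ≤ (4 * ∑ i ∈ s, q (x i) ^ r) ^ (1 / r) := by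
  rcases s.eq_empty_or_nonempty with rfl | hs
  · simp [hq, Real.rpow_nonneg]
  have hρ1 : 1 ≤ 2 * ρ := hρ ▸ Real.one_le_rpow one_le_two (by positivity)
  have hpos_r : ∀ i ∈ s, 0 < q (x i) ^ r := fun i hi => Real.rpow_pos_of_pos (hpos i hi) r
  set S := ∑ i ∈ s, q (x i) ^ r
  have hS : 0 < S := Finset.sum_pos hpos_r hs
  set k := fun i => Int.clog 2 (q (x i) ^ r)
  set K := Int.clog 2 (2 * S)
  have hlevel : ∀ i ∈ s, q (x i) ≤ (2 * ρ) ^ k i := fun i hi => by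
    rw [hρ, Real.rpow_zpow_comm zero_le_two, one_div,
      Real.le_rpow_inv_iff_of_pos (hpos i hi).le (by positivity) hr]
    exact_mod_cast Int.self_le_zpow_clog (R := ℝ) one_lt_two _
  have hK : ∑ i ∈ s, (2 : ℝ) ^ k i < 2 ^ K := calc
    ∑ i ∈ s, (2 : ℝ) ^ k i < ∑ i ∈ s, 2 * q (x i) ^ r :=
      Finset.sum_lt_sum_of_nonempty hs fun i hi => two_zpow_clog_lt_two_mul (hpos_r i hi)
    _ = 2 * S := (Finset.mul_sum _ _ _).symm
    _ ≤ 2 ^ K := by exact_mod_cast Int.self_le_zpow_clog (R := ℝ) one_lt_two _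
  calc q (∑ i ∈ s, x i) ≤ (2 * ρ) ^ K :=
        map_finset_sum_le_zpow_of_sum_two_zpow_lt htri hq hρ1 s x k hlevel hK
    _ = ((2 : ℝ) ^ K) ^ (1 / r) := by rw [hρ, Real.rpow_zpow_comm zero_le_two]
    _ ≤ (4 * S) ^ (1 / r) := by
        gcongr
        linarith [two_zpow_clog_lt_two_mul (by positivity : 0 < 2 * S)]

end AokiRolewicz

theorem aoki_rolewicz_quantitative_general {X : Type*} [AddCommGroup X]
    (q : X → ℝ) (ρ r : ℝ)
    (hq0 : ∀ x, 0 ≤ q x) (hqz : ∀ x, q x = 0 ↔ x = 0)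
    (htri : ∀ x y, q (x + y) ≤ ρ * (q x + q y))
    (hr : 0 < r) (hrρ : (2 : ℝ) ^ (1 / r - 1) = ρ) :
    ∀ (n : ℕ) (x : Fin n → X),
      q (∑ i, x i) ≤ (4 : ℝ) ^ (1 / r) * (∑ i, q (x i) ^ r) ^ (1 / r) := by
  classical
  intro n x
  have h2ρ : 2 * ρ = 2 ^ (1 / r) := by rw [← hrρ, Real.rpow_sub two_pos, Real.rpow_one]; ring
  have hpos : ∀ i ∈ Finset.univ.filter fun i => x i ≠ 0, 0 < q (x i) := fun i hi =>
    (hq0 _).lt_of_ne' (mt (hqz _).1 (Finset.mem_filter.1 hi).2)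
  have hpow_nonneg (i : Fin n) : 0 ≤ q (x i) ^ r := Real.rpow_nonneg (hq0 _) r
  rw [← Finset.sum_filter_ne_zero]
  calc q (∑ i with x i ≠ 0, x i) ≤ (4 * ∑ i with x i ≠ 0, q (x i) ^ r) ^ (1 / r) :=
        AokiRolewicz.map_finset_sum_le_rpow_of_pos htri ((hqz 0).2 rfl) hr h2ρ _ x hpos
    _ ≤ (4 * ∑ i, q (x i) ^ r) ^ (1 / r) := by
        gcongr
        · exact mul_nonneg zero_le_four (Finset.sum_nonneg fun i _ => hpow_nonneg i)
        · exact fun i _ _ => hpow_nonneg i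
        · exact Finset.filter_subset _ _
    _ = 4 ^ (1 / r) * (∑ i, q (x i) ^ r) ^ (1 / r) :=
        Real.mul_rpow zero_le_four (Finset.sum_nonneg fun i _ => hpow_nonneg i)

/-- Quantitative Aoki–Rolewicz: if `q` is a quasi-norm with modulus of
concavity `ρ` and `2^(1/r - 1) = ρ`, then
`q (x₁ + ⋯ + xₙ) ≤ 4^(1/r) * (q x₁ ^ r + ⋯ + q xₙ ^ r)^(1/r)`. -/
theorem aoki_rolewicz_quantitative {X : Type*} [AddCommGroup X] [Module ℂ X]
    (q : X → ℝ) (ρ r : ℝ) (hρ : 1 ≤ ρ)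
    (hq0 : ∀ x, 0 ≤ q x) (hqz : ∀ x, q x = 0 ↔ x = 0)
    (hhom : ∀ (a : ℂ) (x : X), q (a • x) = ‖a‖ * q x)
    (htri : ∀ x y, q (x + y) ≤ ρ * (q x + q y))
    (hr : 0 < r) (hrρ : (2 : ℝ) ^ (1 / r - 1) = ρ) :
    ∀ (n : ℕ) (x : Fin n → X),
      q (∑ i, x i) ≤ (4 : ℝ) ^ (1 / r) * (∑ i, q (x i) ^ r) ^ (1 / r) :=
  aoki_rolewicz_quantitative_general q ρ r hq0 hqz htri hr hrρ
end

section
/- Let (U, δ, Z, F) be an interpolation scale with divisibility constant D_K on a compact set K ⊆ U and modulus of concavity ρ = ρ(F). Then for any f ∈ F, w₀ ∈ U, and z₀ ∈ K with ρ·D_K·|δ(w₀,z₀)| ≤ 1, one has ‖f(z₀)‖_{z₀} ≥ (1/(3ρ))‖f(w₀)‖_{w₀} − |δ(w₀,z₀)|·(ρ D_K/3)·‖f‖_F. -/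
/-!
Let `g` be any representative of `f(z₀)`. Then `f - g` vanishes at `z₀`, so by divisibility
`f - g = δ(·, z₀) h` with `‖h‖ ≤ D ‖f - g‖ ≤ ρ D (‖f‖ + ‖g‖)`, and `g + δ(w₀, z₀) h` represents
`f(w₀)`. Hence `‖f(w₀)‖ ≤ ρ ‖g‖ + ρ² D |δ(w₀, z₀)| (‖f‖ + ‖g‖)`, and the smallness assumption
`ρ D |δ(w₀, z₀)| ≤ 1` absorbs the `‖g‖`-part of the second term into `ρ ‖g‖`. Taking the infimum
over `g` gives the bound.
-/

section QuasiNorm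

variable {F : Type*} [AddCommGroup F] [Module ℂ F] {q : F → ℝ} {ρ : ℝ}

lemma quasinorm_neg (hhom : ∀ (a : ℂ) (f : F), q (a • f) = ‖a‖ * q f) (f : F) :
    q (-f) = q f := by
  simpa using hhom (-1) f

lemma quasinorm_sub_le (hhom : ∀ (a : ℂ) (f : F), q (a • f) = ‖a‖ * q f)
    (htri : ∀ f g, q (f + g) ≤ ρ * (q f + q g)) (f g : F) :
    q (f - g) ≤ ρ * (q f + q g) := by
  simpa [sub_eq_add_neg, quasinorm_neg hhom] using htri f (-g)

lemma quasinorm_add_smul_le (hhom : ∀ (a : ℂ) (f : F), q (a • f) = ‖a‖ * q f)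
    (htri : ∀ f g, q (f + g) ≤ ρ * (q f + q g)) (a : ℂ) (f g : F) :
    q (f + a • g) ≤ ρ * (q f + ‖a‖ * q g) :=
  hhom a g ▸ htri f (a • g)

end QuasiNorm

section QuotientQuasinorm

variable {U Z F : Type*}

/-- The quotient quasi-norm `‖x‖_w` of `X_w = {f(w) : f ∈ F}`. -/
noncomputable def quotientQuasinorm (q : F → ℝ) (ev : F → U → Z) (w : U) (x : Z) : ℝ :=
  sInf {c : ℝ | ∃ f : F, ev f w = x ∧ c = q f}

variable {q : F → ℝ} {ev : F → U → Z} {w : U}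

lemma quotientQuasinorm_le (hq0 : ∀ f, 0 ≤ q f) {f : F} {x : Z} (hf : ev f w = x) :
    quotientQuasinorm q ev w x ≤ q f :=
  csInf_le ⟨0, by rintro c ⟨f', -, rfl⟩; exact hq0 f'⟩ ⟨f, hf, rfl⟩

lemma le_quotientQuasinorm_apply {c : ℝ} {f : F} (h : ∀ g, ev g w = ev f w → c ≤ q g) :
    c ≤ quotientQuasinorm q ev w (ev f w) :=
  le_csInf ⟨q f, f, rfl, rfl⟩ (by rintro _ ⟨g, hg, rfl⟩; exact h g hg)

end QuotientQuasinorm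

section Divisibility

variable {U Z F : Type*} [AddCommGroup Z] [Module ℂ Z] [AddCommGroup F] [Module ℂ F]

def DivisibleAt (δ : U → U → ℂ) (ev : F →ₗ[ℂ] (U → Z)) (q : F → ℝ) (D : ℝ) (z : U) : Prop :=
  ∀ f : F, ev f z = 0 → ∃ h : F, (∀ w : U, δ w z • ev h w = ev f w) ∧ q h ≤ D * q f

variable {δ : U → U → ℂ} {ev : F →ₗ[ℂ] (U → Z)} {q : F → ℝ} {D ρ : ℝ} {z₀ : U}

lemma DivisibleAt.exists_eval_eq_add_smul (hdiv : DivisibleAt δ ev q D z₀) {f g : F}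
    (hg : ev g z₀ = ev f z₀) (w₀ : U) :
    ∃ h : F, ev (g + δ w₀ z₀ • h) w₀ = ev f w₀ ∧ q h ≤ D * q (f - g) := by
  obtain ⟨h, hh, hqh⟩ := hdiv (f - g) (by simp [hg])
  refine ⟨h, ?_, hqh⟩
  have hw₀ := hh w₀
  simp only [map_sub, Pi.sub_apply] at hw₀
  simp [hw₀]

lemma DivisibleAt.quotientQuasinorm_le (hdiv : DivisibleAt δ ev q D z₀) (hD : 0 ≤ D)
    (hρ : 0 ≤ ρ) (hq0 : ∀ f, 0 ≤ q f) (hhom : ∀ (a : ℂ) (f : F), q (a • f) = ‖a‖ * q f)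
    (htri : ∀ f g, q (f + g) ≤ ρ * (q f + q g)) {w₀ : U} (hsmall : ρ * D * ‖δ w₀ z₀‖ ≤ 1)
    {f g : F} (hg : ev g z₀ = ev f z₀) :
    quotientQuasinorm q ev w₀ (ev f w₀) ≤ 2 * ρ * q g + ρ ^ 2 * D * ‖δ w₀ z₀‖ * q f := by
  obtain ⟨h, hev, hqh⟩ := hdiv.exists_eval_eq_add_smul hg w₀
  have hqh' : q h ≤ D * (ρ * (q f + q g)) :=
    hqh.trans (mul_le_mul_of_nonneg_left (quasinorm_sub_le hhom htri f g) hD)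
  have habsorb : ρ * D * ‖δ w₀ z₀‖ * (ρ * q g) ≤ ρ * q g :=
    mul_le_of_le_one_left (mul_nonneg hρ (hq0 g)) hsmall
  calc quotientQuasinorm q ev w₀ (ev f w₀)
      ≤ q (g + δ w₀ z₀ • h) := _root_.quotientQuasinorm_le hq0 hev
    _ ≤ ρ * (q g + ‖δ w₀ z₀‖ * q h) := quasinorm_add_smul_le hhom htri _ g h
    _ ≤ ρ * (q g + ‖δ w₀ z₀‖ * (D * (ρ * (q f + q g)))) := by gcongr
    _ ≤ 2 * ρ * q g + ρ ^ 2 * D * ‖δ w₀ z₀‖ * q f := by nlinarith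

end Divisibility

theorem evaluation_lower_bound_general {U : Type*} {Z F : Type*}
    [AddCommGroup Z] [Module ℂ Z] [AddCommGroup F] [Module ℂ F]
    (δ : U → U → ℂ)
    (qF : F → ℝ) (ρ : ℝ) (hρ : 1 ≤ ρ)
    (hqF0 : ∀ f, 0 ≤ qF f)
    (hFhom : ∀ (a : ℂ) (f : F), qF (a • f) = ‖a‖ * qF f)
    (hFtri : ∀ f g, qF (f + g) ≤ ρ * (qF f + qF g))
    (evF : F →ₗ[ℂ] (U → Z))
    (nX : U → Z → ℝ)
    (hnX : ∀ w x, nX w x = sInf {c : ℝ | ∃ f : F, evF f w = x ∧ c = qF f})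
    -- the compact set and the divisibility axiom on it with constant `D`:
    (K : Set U) (D : ℝ) (hD : 0 < D)
    (hdiv : ∀ z ∈ K, ∀ f : F, evF f z = 0 → ∃ h : F,
      (∀ w : U, δ w z • evF h w = evF f w) ∧ qF h ≤ D * qF f) :
    ∀ (f : F) (w₀ : U), ∀ z₀ ∈ K,
      ρ * D * ‖δ w₀ z₀‖ ≤ 1 →
      nX z₀ (evF f z₀) ≥
        (1 / (3 * ρ)) * nX w₀ (evF f w₀) -
          ‖δ w₀ z₀‖ * (ρ * D / 3) * qF f := by
  intro f w₀ z₀ hz₀ hsmall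
  obtain rfl : nX = quotientQuasinorm qF evF := funext₂ hnX
  have hdiv₀ : DivisibleAt δ evF qF D z₀ := hdiv z₀ hz₀
  have hρ0 : 0 < ρ := one_pos.trans_le hρ
  refine le_quotientQuasinorm_apply fun g hg => ?_
  have hbound := hdiv₀.quotientQuasinorm_le hD.le hρ0.le hqF0 hFhom hFtri hsmall hg
  rw [sub_le_iff_le_add, one_div, inv_mul_le_iff₀ (by positivity)]
  nlinarith [hqF0 g]

/-- Lemma 2.6: for an interpolation scale with divisibility constant `D` on a
compact set `K` and modulus of concavity `ρ`, if `ρ·D·|δ(w₀,z₀)| ≤ 1` then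
`‖f(z₀)‖_{z₀} ≥ (1/(3ρ))‖f(w₀)‖_{w₀} − |δ(w₀,z₀)|·(ρD/3)·‖f‖_F`. -/
theorem evaluation_lower_bound {U : Type*} [TopologicalSpace U] {Z F : Type*}
    [AddCommGroup Z] [Module ℂ Z] [AddCommGroup F] [Module ℂ F]
    (δ : U → U → ℂ)
    (hδcont : Continuous fun p : U × U => δ p.1 p.2)
    (hδ0 : ∀ z w, δ z w = 0 ↔ z = w)
    (qF : F → ℝ) (ρ : ℝ) (hρ : 1 ≤ ρ)
    (hqF0 : ∀ f, 0 ≤ qF f) (hqFz : ∀ f, qF f = 0 ↔ f = 0)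
    (hFhom : ∀ (a : ℂ) (f : F), qF (a • f) = ‖a‖ * qF f)
    (hFtri : ∀ f g, qF (f + g) ≤ ρ * (qF f + qF g))
    (evF : F →ₗ[ℂ] (U → Z))
    (nX : U → Z → ℝ)
    (hnX : ∀ w x, nX w x = sInf {c : ℝ | ∃ f : F, evF f w = x ∧ c = qF f})
    -- the compact set and the divisibility axiom on it with constant `D`:
    (K : Set U) (hK : IsCompact K) (D : ℝ) (hD : 0 < D)
    (hdiv : ∀ z ∈ K, ∀ f : F, evF f z = 0 → ∃ h : F,
      (∀ w : U, δ w z • evF h w = evF f w) ∧ qF h ≤ D * qF f) :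
    ∀ (f : F) (w₀ : U), ∀ z₀ ∈ K,
      ρ * D * ‖δ w₀ z₀‖ ≤ 1 →
      nX z₀ (evF f z₀) ≥
        (1 / (3 * ρ)) * nX w₀ (evF f w₀) -
          ‖δ w₀ z₀‖ * (ρ * D / 3) * qF f :=
  evaluation_lower_bound_general δ qF ρ hρ hqF0 hFhom hFtri evF nX hnX K D hD hdiv
end

section
/- Let {T_w} be an interpolating family of operators between interpolation scales {X_w} and {Y_w} of quasi-Banach spaces (satisfying the admissibility axioms including divisibility). If η(T_{w₀}) > 0 for some w₀ ∈ U (i.e., T_{w₀} is bounded below), then there exist a neighborhood ω of w₀ and C > 0 such that η(T_z) ≥ C for all z ∈ ω; in fact one may take C = η(T_{w₀})/(10 ρ(F) ρ(G)) on a suitable neighborhood. -/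
open Filter Topology

set_option maxHeartbeats 1000000 in
/-- Theorem 2.5: stability of being bounded below on interpolation scales.
If `η(T_{w₀}) ≥ η₀ > 0` then on a neighborhood of `w₀` one has
`η(T_z) ≥ η₀ / (10 ρ(F) ρ(G)) > 0`. -/
theorem bounded_below_stable {U : Type*} [TopologicalSpace U]
    [LocallyCompactSpace U] {Z W F G : Type*}
    [AddCommGroup Z] [Module ℂ Z] [AddCommGroup W] [Module ℂ W]
    [AddCommGroup F] [Module ℂ F] [AddCommGroup G] [Module ℂ G]
    (δ : U → U → ℂ)
    (hδcont : Continuous fun p : U × U => δ p.1 p.2)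
    (hδ0 : ∀ z w, δ z w = 0 ↔ z = w)
    (qF : F → ℝ) (qG : G → ℝ) (ρF ρG : ℝ) (hρF : 1 ≤ ρF) (hρG : 1 ≤ ρG)
    (hqF0 : ∀ f, 0 ≤ qF f) (hqFz : ∀ f, qF f = 0 ↔ f = 0)
    (hFhom : ∀ (a : ℂ) (f : F), qF (a • f) = ‖a‖ * qF f)
    (hFtri : ∀ f g, qF (f + g) ≤ ρF * (qF f + qF g))
    (hqG0 : ∀ g, 0 ≤ qG g) (hqGz : ∀ g, qG g = 0 ↔ g = 0)
    (hGhom : ∀ (a : ℂ) (g : G), qG (a • g) = ‖a‖ * qG g)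
    (hGtri : ∀ g h, qG (g + h) ≤ ρG * (qG g + qG h))
    (hFcomplete : ∀ u : ℕ → F,
      (∀ ε > (0 : ℝ), ∃ N, ∀ m ≥ N, ∀ n ≥ N, qF (u m - u n) < ε) →
      ∃ f : F, Tendsto (fun n => qF (u n - f)) atTop (𝓝 0))
    (hGcomplete : ∀ u : ℕ → G,
      (∀ ε > (0 : ℝ), ∃ N, ∀ m ≥ N, ∀ n ≥ N, qG (u m - u n) < ε) →
      ∃ g : G, Tendsto (fun n => qG (u n - g)) atTop (𝓝 0))
    (evF : F →ₗ[ℂ] (U → Z)) (evG : G →ₗ[ℂ] (U → W))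
    (nX : U → Z → ℝ) (nY : U → W → ℝ)
    (hnX : ∀ w x, nX w x = sInf {c : ℝ | ∃ f : F, evF f w = x ∧ c = qF f})
    (hnY : ∀ w y, nY w y = sInf {c : ℝ | ∃ g : G, evG g w = y ∧ c = qG g})
    -- divisibility axiom on compact sets for both scales:
    (hdivF : ∀ K : Set U, IsCompact K → ∃ D : ℝ, 0 < D ∧
      ∀ z ∈ K, ∀ f : F, evF f z = 0 → ∃ h : F,
        (∀ w : U, δ w z • evF h w = evF f w) ∧ qF h ≤ D * qF f)
    (hdivG : ∀ K : Set U, IsCompact K → ∃ D : ℝ, 0 < D ∧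
      ∀ z ∈ K, ∀ g : G, evG g z = 0 → ∃ h : G,
        (∀ w : U, δ w z • evG h w = evG g w) ∧ qG h ≤ D * qG g)
    -- the interpolating family with interpolation norm M:
    (T : U → (Z →ₗ[ℂ] W)) (M : ℝ) (hM0 : 0 ≤ M)
    (S : F →ₗ[ℂ] G)
    (hS : ∀ (f : F) (w : U), evG (S f) w = T w (evF f w))
    (hSM : ∀ f : F, qG (S f) ≤ M * qF f)
    -- `T_{w₀}` is bounded below by `η₀ > 0`:
    (w₀ : U) (η₀ : ℝ) (hη₀ : 0 < η₀)
    (hbelow : ∀ x : Z, (∃ f : F, evF f w₀ = x) →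
      η₀ * nX w₀ x ≤ nY w₀ (T w₀ x)) :
    ∃ ω ∈ 𝓝 w₀, ∀ z ∈ ω, ∀ x : Z, (∃ f : F, evF f z = x) →
      (η₀ / (10 * ρF * ρG)) * nX z x ≤ nY z (T z x) := by
  classical
  obtain ⟨K, hKc, hKmem⟩ := exists_compact_mem_nhds w₀
  obtain ⟨DF, hDF, hDivF⟩ := hdivF K hKc
  obtain ⟨DG, hDG, hDivG⟩ := hdivG K hKc
  have hρF0 : (0:ℝ) < ρF := lt_of_lt_of_le one_pos hρF
  have hρG0 : (0:ℝ) < ρG := lt_of_lt_of_le one_pos hρG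
  set C : ℝ := η₀ / (10 * ρF * ρG) with hC
  have hC0 : 0 < C := by positivity
  set ε : ℝ := 1 / (4 * ρF) with hε
  have hε0 : 0 < ε := by positivity
  have hεle : ε ≤ 1/4 := by
    rw [hε, div_le_div_iff₀ (by positivity) (by norm_num)]
    nlinarith
  have hρFε : ρF * ε = 1/4 := by
    rw [hε]; field_simp
  set t₁ : ℝ := 1 / (12 * DF * ρF^2) with ht₁
  have ht₁0 : 0 < t₁ := by positivity
  have ht₁eq : 3 * DF * ρF^2 * t₁ = 1/4 := by
    rw [ht₁]; field_simp; ring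
  set t₂ : ℝ := η₀ / (4 * ρF * ρG^2 * DG * (2*M + C + 1)) with ht₂
  have hMC1 : (0:ℝ) < 2*M + C + 1 := by positivity
  have ht₂0 : 0 < t₂ := by positivity
  have ht₂eq : ρG^2 * DG * (2*M + C + 1) * t₂ = η₀ / (4 * ρF) := by
    rw [ht₂]; field_simp
  -- the neighborhood
  have hc1 : Continuous fun z : U => ‖δ z w₀‖ :=
    (hδcont.comp (continuous_id.prodMk continuous_const)).norm
  have hc2 : Continuous fun z : U => ‖δ w₀ z‖ :=
    (hδcont.comp (continuous_const.prodMk continuous_id)).norm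
  have hδ00 : δ w₀ w₀ = 0 := (hδ0 w₀ w₀).mpr rfl
  have hV1 : {z : U | ‖δ z w₀‖ < t₁} ∈ 𝓝 w₀ :=
    (isOpen_lt hc1 continuous_const).mem_nhds (by simp [hδ00, ht₁0])
  have hV2 : {z : U | ‖δ w₀ z‖ < t₂} ∈ 𝓝 w₀ :=
    (isOpen_lt hc2 continuous_const).mem_nhds (by simp [hδ00, ht₂0])
  have hw₀K : w₀ ∈ K := mem_of_mem_nhds hKmem
  refine ⟨K ∩ ({z : U | ‖δ z w₀‖ < t₁} ∩ {z : U | ‖δ w₀ z‖ < t₂}),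
    Filter.inter_mem hKmem (Filter.inter_mem hV1 hV2), ?_⟩
  rintro z ⟨hzK, hzt₁, hzt₂⟩ x ⟨f₀, hf₀⟩
  set ε₁ : ℝ := ‖δ z w₀‖ with hε₁
  set ε₂ : ℝ := ‖δ w₀ z‖ with hε₂
  have hε₁0 : 0 ≤ ε₁ := norm_nonneg _
  have hε₂0 : 0 ≤ ε₂ := norm_nonneg _
  have hε₁t : ε₁ ≤ t₁ := le_of_lt hzt₁
  have hε₂t : ε₂ ≤ t₂ := le_of_lt hzt₂
  -- basic facts about the sInf sets
  have bddX : ∀ (w : U) (a : Z), BddBelow {c : ℝ | ∃ f : F, evF f w = a ∧ c = qF f} :=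
    fun w a => ⟨0, by rintro c ⟨f, -, rfl⟩; exact hqF0 f⟩
  have bddY : ∀ (w : U) (a : W), BddBelow {c : ℝ | ∃ g : G, evG g w = a ∧ c = qG g} :=
    fun w a => ⟨0, by rintro c ⟨g, -, rfl⟩; exact hqG0 g⟩
  have nXle : ∀ (w : U) (f : F), nX w (evF f w) ≤ qF f := by
    intro w f
    rw [hnX]
    exact csInf_le (bddX _ _) ⟨f, rfl, rfl⟩
  have nYle : ∀ (w : U) (g : G), nY w (evG g w) ≤ qG g := by
    intro w g
    rw [hnY]
    exact csInf_le (bddY _ _) ⟨g, rfl, rfl⟩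
  set N : ℝ := nX z x with hN
  have hN0 : 0 ≤ N := by
    rw [hN, hnX]
    exact Real.sInf_nonneg (by rintro c ⟨f, -, rfl⟩; exact hqF0 f)
  -- the target as a lower bound over all representatives g
  rw [hnY]
  have hSetYne : ∃ c, c ∈ {c : ℝ | ∃ g : G, evG g z = T z x ∧ c = qG g} :=
    ⟨qG (S f₀), S f₀, by rw [hS, hf₀], rfl⟩
  refine le_csInf hSetYne ?_
  rintro b ⟨g, hgz, rfl⟩
  -- trivial case N = 0
  rcases eq_or_lt_of_le hN0 with hNz | hNpos
  · rw [← hNz]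
    simpa using hqG0 g
  have hεN : ε * N ≤ (1/4) * N := mul_le_mul_of_nonneg_right hεle hN0
  -- choose a near-optimal representative f of x at z
  have hXne : {c : ℝ | ∃ f : F, evF f z = x ∧ c = qF f}.Nonempty := ⟨qF f₀, f₀, hf₀, rfl⟩
  obtain ⟨-, ⟨f, hfz, rfl⟩, hfN⟩ :=
    exists_lt_of_csInf_lt hXne (show sInf _ < N + ε * N by
      rw [← hnX, ← hN]; linarith [mul_pos hε0 hNpos])
  set A : ℝ := nX w₀ (evF f w₀) with hA
  have hA0 : 0 ≤ A := by
    rw [hA, hnX]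
    exact Real.sInf_nonneg (by rintro c ⟨f', -, rfl⟩; exact hqF0 f')
  have hAf : A ≤ qF f := nXle w₀ f
  -- choose a near-optimal representative f' of f(w₀) at w₀
  have hXne' : {c : ℝ | ∃ h : F, evF h w₀ = evF f w₀ ∧ c = qF h}.Nonempty := ⟨qF f, f, rfl, rfl⟩
  obtain ⟨-, ⟨f', hf'w, rfl⟩, hf'A⟩ :=
    exists_lt_of_csInf_lt hXne' (show sInf _ < A + ε * N by
      rw [← hnX, ← hA]; linarith [mul_pos hε0 hNpos])
  have hqf : qF f ≤ N + ε * N := le_of_lt hfN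
  have hqf' : qF f' ≤ A + ε * N := le_of_lt hf'A
  -- divisibility on F at w₀ applied to f - f'
  have hsub0 : evF (f - f') w₀ = 0 := by
    rw [map_sub, Pi.sub_apply, hf'w, sub_self]
  obtain ⟨k, hk, hkq⟩ := hDivF w₀ hw₀K (f - f') hsub0
  have hkval : δ z w₀ • evF k z = evF f z - evF f' z := by
    have := hk z
    rwa [map_sub, Pi.sub_apply] at this
  -- lower bound piece: N ≤ qF (f' + δ z w₀ • k)
  have hrep : evF (f' + (δ z w₀) • k) z = x := by
    rw [map_add, map_smul, Pi.add_apply, Pi.smul_apply, hkval, hfz]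
    abel
  have hNle : N ≤ qF (f' + (δ z w₀) • k) := by
    rw [hN, hnX]
    exact csInf_le (bddX _ _) ⟨_, hrep, rfl⟩
  have hktri : qF (f - f') ≤ ρF * (qF f + qF f') := by
    have h1 : f - f' = f + (-1 : ℂ) • f' := by
      rw [neg_one_smul]; abel
    have h2 := hFtri f ((-1 : ℂ) • f')
    rw [hFhom] at h2
    simpa [h1] using h2
  have hsum3 : qF f + qF f' ≤ 3 * N := by linarith
  have hqk3 : qF k ≤ DF * ρF * (3 * N) := by
    calc qF k ≤ DF * qF (f - f') := hkq
      _ ≤ DF * (ρF * (qF f + qF f')) := mul_le_mul_of_nonneg_left hktri hDF.le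
      _ = DF * ρF * (qF f + qF f') := by ring
      _ ≤ DF * ρF * (3 * N) := mul_le_mul_of_nonneg_left hsum3 (by positivity)
  have hNchain : N ≤ ρF * (qF f' + ε₁ * qF k) := by
    refine hNle.trans ?_
    have h2 := hFtri f' ((δ z w₀) • k)
    rw [hFhom] at h2
    exact h2
  -- numeric bound on N from the F side: N ≤ 2 ρF A
  have hterm1 : ρF * (ε₁ * qF k) ≤ (1/4) * N := by
    have h1 : ε₁ * qF k ≤ t₁ * (DF * ρF * (3 * N)) :=
      mul_le_mul hε₁t hqk3 (hqF0 k) ht₁0.le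
    calc ρF * (ε₁ * qF k) ≤ ρF * (t₁ * (DF * ρF * (3 * N))) :=
          mul_le_mul_of_nonneg_left h1 hρF0.le
      _ = (3 * DF * ρF^2 * t₁) * N := by ring
      _ = (1/4) * N := by rw [ht₁eq]
  have hterm0 : ρF * qF f' ≤ ρF * A + (1/4) * N := by
    have h1 : ρF * qF f' ≤ ρF * (A + ε * N) := mul_le_mul_of_nonneg_left hqf' hρF0.le
    have h2 : ρF * (A + ε * N) = ρF * A + (ρF * ε) * N := by ring
    rw [h2, hρFε] at h1
    exact h1
  have hAN : N ≤ 2 * ρF * A := by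
    have := hNchain
    have hsplit : ρF * (qF f' + ε₁ * qF k) = ρF * qF f' + ρF * (ε₁ * qF k) := by ring
    rw [hsplit] at this
    linarith
  -- G side: divisibility at z applied to S f - g
  have hG0 : evG (S f - g) z = 0 := by
    rw [map_sub, Pi.sub_apply, hS, hfz, hgz, sub_self]
  obtain ⟨h, hh, hhq⟩ := hDivG z hzK (S f - g) hG0
  have hhval : δ w₀ z • evG h w₀ = evG (S f) w₀ - evG g w₀ := by
    have := hh w₀
    rwa [map_sub, Pi.sub_apply] at this
  have hrepY : evG (g + (δ w₀ z) • h) w₀ = T w₀ (evF f w₀) := by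
    rw [map_add, map_smul, Pi.add_apply, Pi.smul_apply, hhval, ← hS]
    abel
  have hηA : η₀ * A ≤ qG (g + (δ w₀ z) • h) := by
    refine (hbelow (evF f w₀) ⟨f, rfl⟩).trans ?_
    rw [← hrepY]
    exact nYle w₀ _
  have htriY : qG (g + (δ w₀ z) • h) ≤ ρG * qG g + ρG * (ε₂ * qG h) := by
    have h2 := hGtri g ((δ w₀ z) • h)
    rw [hGhom] at h2
    calc qG (g + (δ w₀ z) • h) ≤ ρG * (qG g + ε₂ * qG h) := h2
      _ = ρG * qG g + ρG * (ε₂ * qG h) := by ring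
  have hhtri : qG (S f - g) ≤ ρG * (qG (S f) + qG g) := by
    have h1 : S f - g = S f + (-1 : ℂ) • g := by
      rw [neg_one_smul]; abel
    have h2 := hGtri (S f) ((-1 : ℂ) • g)
    rw [hGhom] at h2
    simpa [h1] using h2
  have hSfb : qG (S f) ≤ 2 * M * N := by
    calc qG (S f) ≤ M * qF f := hSM f
      _ ≤ M * (N + ε * N) := mul_le_mul_of_nonneg_left hqf hM0
      _ ≤ M * (2 * N) := mul_le_mul_of_nonneg_left (by linarith) hM0
      _ = 2 * M * N := by ring
  -- final combination
  rcases le_or_gt (C * N) (qG g) with hdone | hless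
  · exact hdone
  exfalso
  have hg0 : 0 ≤ qG g := hqG0 g
  have hqhb : qG h ≤ DG * ρG * ((2*M + C) * N) := by
    calc qG h ≤ DG * qG (S f - g) := hhq
      _ ≤ DG * (ρG * (qG (S f) + qG g)) := mul_le_mul_of_nonneg_left hhtri hDG.le
      _ = DG * ρG * (qG (S f) + qG g) := by ring
      _ ≤ DG * ρG * ((2*M + C) * N) := by
          refine mul_le_mul_of_nonneg_left ?_ (by positivity)
          have : qG g ≤ C * N := hless.le
          linarith
  have hterm2 : ρG * (ε₂ * qG h) ≤ (η₀ / (4 * ρF)) * N := by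
    have h1 : ε₂ * qG h ≤ t₂ * (DG * ρG * ((2*M + C) * N)) :=
      mul_le_mul hε₂t hqhb (hqG0 h) ht₂0.le
    have h2 : ρG * (ε₂ * qG h) ≤ (ρG^2 * DG * (2*M + C) * t₂) * N := by
      calc ρG * (ε₂ * qG h) ≤ ρG * (t₂ * (DG * ρG * ((2*M + C) * N))) :=
            mul_le_mul_of_nonneg_left h1 hρG0.le
        _ = (ρG^2 * DG * (2*M + C) * t₂) * N := by ring
    have h3 : (ρG^2 * DG * (2*M + C) * t₂) * N ≤ (ρG^2 * DG * (2*M + C + 1) * t₂) * N := by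
      have hMC0 : (0:ℝ) ≤ 2*M + C := by positivity
      have := mul_le_mul_of_nonneg_left (show 2*M + C ≤ 2*M + C + 1 by linarith)
        (show (0:ℝ) ≤ ρG^2 * DG * t₂ by positivity)
      have h4 : ρG^2 * DG * t₂ * (2*M + C) = ρG^2 * DG * (2*M + C) * t₂ := by ring
      have h5 : ρG^2 * DG * t₂ * (2*M + C + 1) = ρG^2 * DG * (2*M + C + 1) * t₂ := by ring
      rw [h4, h5] at this
      exact mul_le_mul_of_nonneg_right this hN0
    rw [ht₂eq] at h3
    linarith
  have hmain : η₀ * A ≤ ρG * qG g + (η₀ / (4 * ρF)) * N := by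
    have := hηA.trans htriY
    linarith
  have hA2 : (η₀ / (2 * ρF)) * N ≤ η₀ * A := by
    have h1 : (η₀ / (2 * ρF)) * N ≤ (η₀ / (2 * ρF)) * (2 * ρF * A) :=
      mul_le_mul_of_nonneg_left hAN (by positivity)
    have h2 : (η₀ / (2 * ρF)) * (2 * ρF * A) = η₀ * A := by
      field_simp
    linarith
  have hglow : (η₀ / (4 * ρF)) * N ≤ ρG * qG g := by
    have h1 : (η₀ / (2 * ρF)) * N = (η₀ / (4 * ρF)) * N + (η₀ / (4 * ρF)) * N := by
      field_simp; ring
    linarith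
  have hgup : ρG * qG g < (η₀ / (10 * ρF)) * N := by
    have h1 : ρG * qG g < ρG * (C * N) := mul_lt_mul_of_pos_left hless hρG0
    have h2 : ρG * (C * N) = (η₀ / (10 * ρF)) * N := by
      rw [hC]; field_simp
    linarith
  have hcmp : (η₀ / (10 * ρF)) * N < (η₀ / (4 * ρF)) * N := by
    have h1 : η₀ / (10 * ρF) < η₀ / (4 * ρF) :=
      div_lt_div_of_pos_left hη₀ (by positivity) (by linarith)
    exact mul_lt_mul_of_pos_right h1 hNpos
  linarith
end

section
/- Let X be a finite-dimensional complex vector space with a continuous quasi-norm ‖·‖ whose closed unit ball is closed. Then X admits an Auerbach basis: vectors x₁,…,xₙ (n = dim X) with ‖xᵢ‖ = 1 for all i and ‖∑ aᵢxᵢ‖ ≥ max|aᵢ| for all scalars a₁,…,aₙ. -/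
/-!
The unit sphere `S = {q = 1}` is compact: in coordinates, a continuous, positive, absolutely
homogeneous function dominates a multiple of a norm, so its sublevel sets are bounded. Fix a basis
`e` and pick `v ∈ Sⁿ` maximising `‖e.det v‖` (Auerbach's trick); the maximum is nonzero, so `v` is a
basis. For `y = ∑ aⱼ vⱼ ≠ 0`, replacing `vᵢ` by `y / q y ∈ S` multiplies the determinant by
`aᵢ / q y`, and maximality gives `‖aᵢ‖ ≤ q y`.
-/

open Module Function Set

section NormedSpace

variable {𝕜 E : Type*} [RCLike 𝕜] [NormedAddCommGroup E] [NormedSpace 𝕜 E] {g : E → ℝ}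

theorem exists_pos_mul_norm_le_of_homogeneous [ProperSpace E] (hcont : Continuous g)
    (hpos : ∀ y, y ≠ 0 → 0 < g y) (hhom : ∀ (c : 𝕜) y, g (c • y) = ‖c‖ * g y) :
    ∃ m, 0 < m ∧ ∀ y, m * ‖y‖ ≤ g y := by
  obtain ⟨m, hm, hmin⟩ := (isCompact_sphere (0 : E) 1).exists_forall_le' hcont.continuousOn
    fun u hu => hpos u (ne_zero_of_mem_unit_sphere ⟨u, hu⟩)
  refine ⟨m, hm, fun y => ?_⟩
  rcases eq_or_ne y 0 with rfl | hy
  · have hg0 : g 0 = 0 := by simpa using hhom 0 0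
    simp [hg0]
  have hny : 0 < ‖y‖ := norm_pos_iff.mpr hy
  have hu : (‖y‖⁻¹ : 𝕜) • y ∈ Metric.sphere (0 : E) 1 := by
    simp [norm_smul, hny.ne']
  calc m * ‖y‖ ≤ g ((‖y‖⁻¹ : 𝕜) • y) * ‖y‖ := by gcongr; exact hmin _ hu
    _ = g y := by
      rw [hhom]
      simp only [norm_inv, RCLike.norm_ofReal, abs_norm]
      field_simp

theorem isCompact_setOf_le_one_of_homogeneous [ProperSpace E] (hcont : Continuous g)
    (hpos : ∀ y, y ≠ 0 → 0 < g y) (hhom : ∀ (c : 𝕜) y, g (c • y) = ‖c‖ * g y) :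
    IsCompact {y | g y ≤ 1} := by
  obtain ⟨m, hm, hle⟩ := exists_pos_mul_norm_le_of_homogeneous hcont hpos hhom
  refine (isCompact_closedBall (0 : E) m⁻¹).of_isClosed_subset
    (isClosed_le hcont continuous_const) fun y hy => ?_
  rw [mem_closedBall_zero_iff, ← mul_one m⁻¹, le_inv_mul_iff₀ hm]
  exact (hle y).trans hy

end NormedSpace

theorem AlternatingMap.map_update_sum_smul {R M N ι : Type*} [CommSemiring R] [AddCommMonoid M]
    [Module R M] [AddCommMonoid N] [Module R N] [Fintype ι] [DecidableEq ι]
    (f : M [⋀^ι]→ₗ[R] N) (v : ι → M) (a : ι → R) (i : ι) :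
    f (update v i (∑ j, a j • v j)) = a i • f v := by
  rw [f.map_update_sum, Finset.sum_eq_single i (fun j _ hj => ?_) (by simp),
    f.map_update_smul, update_eq_self]
  rw [f.map_update_smul, f.map_eq_zero_of_eq _ (by simp [hj]) hj, smul_zero]

section Auerbach

variable {𝕜 X ι : Type*} [RCLike 𝕜] [AddCommGroup X] [Module 𝕜 X] [Fintype ι] [DecidableEq ι]
  {q : X → ℝ}

theorem apply_inv_smul_self_eq_one (hhom : ∀ (c : 𝕜) x, q (c • x) = ‖c‖ * q x) {x : X}
    (hx : 0 < q x) : q ((q x : 𝕜)⁻¹ • x) = 1 := by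
  rw [hhom, norm_inv, RCLike.norm_ofReal, abs_of_pos hx, inv_mul_cancel₀ hx.ne']

theorem norm_le_of_isMaxOn_norm_det (e : Basis ι 𝕜 X)
    (hpos : ∀ x, x ≠ 0 → 0 < q x) (hhom : ∀ (c : 𝕜) x, q (c • x) = ‖c‖ * q x) {v : ι → X}
    (hv : v ∈ univ.pi fun _ => {x | q x = 1})
    (hmax : IsMaxOn (fun w => ‖e.det w‖) (univ.pi fun _ => {x | q x = 1}) v)
    (hdet : e.det v ≠ 0) (a : ι → 𝕜) (i : ι) : ‖a i‖ ≤ q (∑ j, a j • v j) := by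
  set y := ∑ j, a j • v j
  have hupdate (c : 𝕜) : e.det (update v i (c • y)) = c * (a i * e.det v) := by
    rw [e.det.map_update_smul, e.det.map_update_sum_smul, smul_eq_mul, smul_eq_mul]
  rcases eq_or_ne y 0 with hy | hy
  · have hai : a i = 0 := by simpa [hy, hdet, eq_comm] using hupdate 1
    have hq0 : q 0 = 0 := by simpa using hhom 0 0
    rw [hai, norm_zero, hy, hq0]
  have hqy := hpos y hy
  have hmem : update v i ((q y : 𝕜)⁻¹ • y) ∈ univ.pi fun _ => {x | q x = 1} := by
    intro j _
    rcases eq_or_ne j i with rfl | hj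
    · simpa using apply_inv_smul_self_eq_one hhom hqy
    · simpa [hj] using hv j trivial
  have hle := hmax hmem
  simp only [mem_ofPred_eq, hupdate, norm_mul, norm_inv, RCLike.norm_ofReal, abs_of_pos hqy]
    at hle
  rw [inv_mul_le_iff₀ hqy] at hle
  exact le_of_mul_le_mul_right hle (norm_pos_iff.mpr hdet)

end Auerbach

section TopologicalVectorSpace

variable {𝕜 X : Type*} [RCLike 𝕜] [AddCommGroup X] [Module 𝕜 X] [TopologicalSpace X]
  [IsTopologicalAddGroup X] [ContinuousSMul 𝕜 X] [T2Space X] {q : X → ℝ}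

theorem isCompact_setOf_eq_one_of_homogeneous [FiniteDimensional 𝕜 X] (hcont : Continuous q)
    (hpos : ∀ x, x ≠ 0 → 0 < q x) (hhom : ∀ (c : 𝕜) x, q (c • x) = ‖c‖ * q x) :
    IsCompact {x | q x = 1} := by
  let φ := (finBasis 𝕜 X).equivFunL
  have hball : IsCompact {y | q (φ.symm y) ≤ 1} :=
    isCompact_setOf_le_one_of_homogeneous (𝕜 := 𝕜) (hcont.comp φ.symm.continuous)
      (fun y hy => hpos _ (by simpa using hy)) (fun c y => by simp [hhom])
  have : IsCompact {x | q x ≤ 1} := by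
    simpa [preimage_ofPred_eq] using φ.toHomeomorph.isCompact_preimage.2 hball
  exact this.of_isClosed_subset (isClosed_eq hcont continuous_const) fun x hx => le_of_eq hx

theorem Module.Basis.continuous_det {ι : Type*} [Fintype ι] [DecidableEq ι] (e : Basis ι 𝕜 X) :
    Continuous fun v : ι → X => e.det v := by
  simp only [e.det_apply]
  exact (continuous_matrix fun i j => (continuous_apply i).comp
    (e.equivFunL.continuous.comp (continuous_apply j))).matrix_det

theorem exists_isMaxOn_norm_det {ι : Type*} [Fintype ι] [DecidableEq ι] (e : Basis ι 𝕜 X)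
    (hS : IsCompact {x | q x = 1}) (hpos : ∀ x, x ≠ 0 → 0 < q x)
    (hhom : ∀ (c : 𝕜) x, q (c • x) = ‖c‖ * q x) :
    ∃ v ∈ univ.pi fun _ => {x | q x = 1},
      IsMaxOn (fun w => ‖e.det w‖) (univ.pi fun _ => {x | q x = 1}) v ∧ e.det v ≠ 0 := by
  let w := fun i => (q (e i) : 𝕜)⁻¹ • e i
  have hw : w ∈ univ.pi fun _ => {x | q x = 1} :=
    fun i _ => apply_inv_smul_self_eq_one hhom (hpos _ (e.ne_zero i))
  have hdetw : e.det w ≠ 0 := by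
    rw [e.det.map_smul_univ, e.det_self, smul_eq_mul, mul_one]
    exact Finset.prod_ne_zero_iff.mpr fun i _ => by simpa using (hpos _ (e.ne_zero i)).ne'
  obtain ⟨v, hv, hmax⟩ := (isCompact_univ_pi fun _ => hS).exists_isMaxOn ⟨w, hw⟩
    e.continuous_det.norm.continuousOn
  refine ⟨v, hv, hmax, fun hv0 => hdetw ?_⟩
  simpa [hv0] using hmax hw

end TopologicalVectorSpace

theorem auerbach_basis_exists_general {X : Type*} [AddCommGroup X] [Module ℂ X]
    [TopologicalSpace X] [IsTopologicalAddGroup X] [ContinuousSMul ℂ X]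
    [T2Space X] [FiniteDimensional ℂ X]
    (q : X → ℝ)
    (hq0 : ∀ x, 0 ≤ q x) (hqz : ∀ x, q x = 0 ↔ x = 0)
    (hhom : ∀ (a : ℂ) (x : X), q (a • x) = ‖a‖ * q x)
    (hcont : Continuous q) :
    ∃ b : Module.Basis (Fin (Module.finrank ℂ X)) ℂ X,
      (∀ i, q (b i) = 1) ∧
      ∀ a : Fin (Module.finrank ℂ X) → ℂ,
        ∀ i, ‖a i‖ ≤ q (∑ j, a j • b j) := by
  have hpos (x : X) (hx : x ≠ 0) : 0 < q x := (hq0 x).lt_of_ne' (by rwa [Ne, hqz])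
  let e := finBasis ℂ X
  obtain ⟨v, hv, hmax, hdet⟩ := exists_isMaxOn_norm_det e
    (isCompact_setOf_eq_one_of_homogeneous hcont hpos hhom) hpos hhom
  obtain ⟨hli, hspan⟩ := e.is_basis_iff_det.mpr (isUnit_iff_ne_zero.mpr hdet)
  refine ⟨.mk hli hspan.ge, fun i => by simpa using hv i trivial, fun a i => ?_⟩
  simpa using norm_le_of_isMaxOn_norm_det e hpos hhom hv hmax hdet a i

/-- Existence of Auerbach bases for continuous quasi-norms on
finite-dimensional complex vector spaces with closed unit ball. -/
theorem auerbach_basis_exists {X : Type*} [AddCommGroup X] [Module ℂ X]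
    [TopologicalSpace X] [IsTopologicalAddGroup X] [ContinuousSMul ℂ X]
    [T2Space X] [FiniteDimensional ℂ X]
    (q : X → ℝ) (ρ : ℝ) (hρ : 1 ≤ ρ)
    (hq0 : ∀ x, 0 ≤ q x) (hqz : ∀ x, q x = 0 ↔ x = 0)
    (hhom : ∀ (a : ℂ) (x : X), q (a • x) = ‖a‖ * q x)
    (htri : ∀ x y, q (x + y) ≤ ρ * (q x + q y))
    (hcont : Continuous q)
    (hball : IsClosed {x : X | q x ≤ 1}) :
    ∃ b : Module.Basis (Fin (Module.finrank ℂ X)) ℂ X,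
      (∀ i, q (b i) = 1) ∧
      ∀ a : Fin (Module.finrank ℂ X) → ℂ,
        ∀ i, ‖a i‖ ≤ q (∑ j, a j • b j) :=
  auerbach_basis_exists_general q hq0 hqz hhom hcont
end
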